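/- arXiv:0903.1030 — 3 statements merged into one kernel-verified Lean document; each statement's English description precedes it below -/
import Mathlib

section
/- A binomial f = X^u − X^v ∈ I_A with u ≠ v is an indispensable binomial of I_A if and only if every A-homogeneous generating set of I_A contains a nonzero scalar multiple of f. -/
/-!
Every binomial `X^p - X^q` with `π p = π q` vanishes at `(1, …, 1)`, so every element of `I_A`
has coefficient sum `0`; an `A`-homogeneous element of `I_A` is therefore a combination of
binomials `X^d - X^e` of its own degree. If `f = X^u - X^v` is indispensable, the fiber of
`π u` is `{u, v}` (a third point `w` would give `f = (X^u - X^w) + (X^w - X^v)`), so the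
homogeneous elements of `I_A` of that degree are multiples of `f`. A homogeneous generating set
without a nonzero multiple of `f` would then show that the binomials other than `±f` generate
`I_A`. Conversely, binomial generating sets are homogeneous, and `c • f = X^p - X^q` forces
`c = ±1`.
-/

open MvPolynomial

/-- The monomial `X^u = ∏ i, X i ^ u i` in `k[X_1, …, X_r]`. -/
noncomputable def mon (k : Type*) [Field k] {r : ℕ} (u : Fin r → ℕ) :
    MvPolynomial (Fin r) k :=
  ∏ i, X i ^ u i

/-- `S` is a binomial generating set of `IA`: a set of pure-difference binomials
`X^u - X^v` with `π u = π v` generating `IA` as an ideal. -/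
def IsBinomGenSet (k : Type*) [Field k] {r : ℕ} {A : Type*} [AddCancelCommMonoid A]
    (π : (Fin r → ℕ) → A) (IA : Ideal (MvPolynomial (Fin r) k))
    (S : Set (MvPolynomial (Fin r) k)) : Prop :=
  (∀ f ∈ S, ∃ u v : Fin r → ℕ, π u = π v ∧ f = mon k u - mon k v) ∧ Ideal.span S = IA

/-- A minimal binomial generating set: no proper subset generates `IA`. -/
def IsMinBinomGenSet (k : Type*) [Field k] {r : ℕ} {A : Type*} [AddCancelCommMonoid A]
    (π : (Fin r → ℕ) → A) (IA : Ideal (MvPolynomial (Fin r) k))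
    (S : Set (MvPolynomial (Fin r) k)) : Prop :=
  IsBinomGenSet k π IA S ∧ ∀ T, T ⊂ S → Ideal.span T ≠ IA

/-- `f` is an indispensable binomial of `IA`: a binomial `X^u - X^v ∈ IA` with `u ≠ v`
such that every binomial generating set of `IA` contains `f` or `-f`. -/
def IsIndispBinomial (k : Type*) [Field k] {r : ℕ} {A : Type*} [AddCancelCommMonoid A]
    (π : (Fin r → ℕ) → A) (IA : Ideal (MvPolynomial (Fin r) k))
    (f : MvPolynomial (Fin r) k) : Prop :=
  (∃ u v : Fin r → ℕ, u ≠ v ∧ π u = π v ∧ f = mon k u - mon k v) ∧ f ∈ IA ∧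
    ∀ S, IsBinomGenSet k π IA S → f ∈ S ∨ -f ∈ S

/-- `X^u` is an indispensable monomial of `IA`: every binomial generating set of `IA`
contains a binomial `X^u - X^v` or `X^v - X^u` for some `v`. -/
def IsIndispMonomial (k : Type*) [Field k] {r : ℕ} {A : Type*} [AddCancelCommMonoid A]
    (π : (Fin r → ℕ) → A) (IA : Ideal (MvPolynomial (Fin r) k))
    (u : Fin r → ℕ) : Prop :=
  ∀ S, IsBinomGenSet k π IA S →
    ∃ f ∈ S, ∃ v : Fin r → ℕ, f = mon k u - mon k v ∨ f = mon k v - mon k u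

/-- `S` is an `A`-homogeneous generating set of `IA`: a set of `A`-homogeneous
polynomials generating `IA` as an ideal. -/
def IsHomogGenSet (k : Type*) [Field k] {r : ℕ} {A : Type*} [AddCancelCommMonoid A]
    (π : (Fin r → ℕ) → A) (IA : Ideal (MvPolynomial (Fin r) k))
    (S : Set (MvPolynomial (Fin r) k)) : Prop :=
  (∀ f ∈ S, ∃ b : A, ∀ d ∈ f.support, π ⇑d = b) ∧ Ideal.span S = IA

/-- A minimal `A`-homogeneous generating set: no proper subset generates `IA`. -/
def IsMinHomogGenSet (k : Type*) [Field k] {r : ℕ} {A : Type*} [AddCancelCommMonoid A]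
    (π : (Fin r → ℕ) → A) (IA : Ideal (MvPolynomial (Fin r) k))
    (S : Set (MvPolynomial (Fin r) k)) : Prop :=
  IsHomogGenSet k π IA S ∧ ∀ T, T ⊂ S → Ideal.span T ≠ IA

/-- `b` is an indispensable `A`-degree of `IA`: every binomial generating set of `IA`
contains a binomial both of whose monomials have `A`-degree `b`, and every minimal
binomial generating set contains exactly one such binomial. -/
def IsIndispDegree (k : Type*) [Field k] {r : ℕ} {A : Type*} [AddCancelCommMonoid A]
    (π : (Fin r → ℕ) → A) (IA : Ideal (MvPolynomial (Fin r) k)) (b : A) : Prop :=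
  (∀ S, IsBinomGenSet k π IA S →
    ∃ f ∈ S, ∃ u v : Fin r → ℕ, π u = b ∧ π v = b ∧ f = mon k u - mon k v) ∧
  ∀ S, IsMinBinomGenSet k π IA S →
    ∃! f, f ∈ S ∧ ∃ u v : Fin r → ℕ, π u = b ∧ π v = b ∧ f = mon k u - mon k v

section
variable {R σ : Type*} [CommRing R]

theorem mem_ideal_of_sum_coeff_eq_zero {I : Ideal (MvPolynomial σ R)} {s : MvPolynomial σ R}
    (hs : ∑ d ∈ s.support, coeff d s = 0)
    (hI : ∀ d ∈ s.support, ∀ e ∈ s.support, monomial d 1 - monomial e 1 ∈ I) : s ∈ I := by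
  rcases s.support.eq_empty_or_nonempty with hs0 | ⟨d₀, hd₀⟩
  · rw [support_eq_empty.mp hs0]
    exact I.zero_mem
  have hs_eq : s = ∑ d ∈ s.support, C (coeff d s) * (monomial d 1 - monomial d₀ 1) := by
    calc s = ∑ d ∈ s.support, monomial d (coeff d s)
          - monomial d₀ (∑ d ∈ s.support, coeff d s) := by
          rw [hs, map_zero, sub_zero, ← as_sum]
      _ = _ := by
          simp only [map_sum, ← Finset.sum_sub_distrib, mul_sub, C_mul_monomial, mul_one]
  rw [hs_eq]
  exact I.sum_mem fun d hd => I.mul_mem_left _ (hI d hd d₀ hd₀)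

theorem eq_coeff_smul_of_support_subset {s : MvPolynomial σ R} {p q : σ →₀ ℕ} (hpq : p ≠ q)
    (hsupp : ∀ d ∈ s.support, d = p ∨ d = q) (hs : ∑ d ∈ s.support, coeff d s = 0) :
    s = coeff p s • (monomial p 1 - monomial q 1) := by
  classical
  have hq : coeff q s = -coeff p s := by
    rw [Finset.sum_subset (s₂ := {p, q}) (fun d hd => by simpa using hsupp d hd)
      fun d _ hd => notMem_support_iff.mp hd, Finset.sum_pair hpq] at hs
    exact eq_neg_of_add_eq_zero_right hs
  ext d
  by_cases hdp : d = p
  · subst hdp; simp [coeff_monomial, hpq.symm]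
  by_cases hdq : d = q
  · subst hdq; simp [coeff_monomial, hq, hpq]
  have hd : d ∉ s.support := fun hd => (hsupp d hd).elim hdp hdq
  simp [notMem_support_iff.mp hd, coeff_monomial, Ne.symm hdp, Ne.symm hdq]

theorem smul_monomial_sub_monomial_eq [Nontrivial R] {c : R} (hc : c ≠ 0) {p q p' q' : σ →₀ ℕ}
    (hpq : p ≠ q) (h : c • (monomial p (1 : R) - monomial q 1) = monomial p' 1 - monomial q' 1) :
    (c = 1 ∧ p' = p ∧ q' = q) ∨ (c = -1 ∧ p' = q ∧ q' = p) := by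
  classical
  have hp := congrArg (coeff p) h
  have hq := congrArg (coeff q) h
  simp only [coeff_smul, coeff_sub, coeff_monomial, hpq, Ne.symm hpq, if_true, if_false,
    smul_eq_mul] at hp hq
  split_ifs at hp hq <;> subst_vars <;> simp_all [eq_neg_iff_add_eq_zero]

theorem monomial_sub_monomial_mem_pair_neg [Nontrivial R] {p q d e : σ →₀ ℕ} (hpq : p ≠ q)
    (h : monomial d (1 : R) - monomial e 1 ∈
      ({monomial p 1 - monomial q 1, -(monomial p 1 - monomial q 1)} : Set _)) :
    (d = p ∧ e = q) ∨ (d = q ∧ e = p) := by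
  obtain ⟨c, hc, hcf⟩ : ∃ c : R, c ≠ 0 ∧
      c • (monomial p (1 : R) - monomial q 1) = monomial d 1 - monomial e 1 := by
    rcases h with h | h
    exacts [⟨1, one_ne_zero, by rw [one_smul, h]⟩,
      ⟨-1, neg_ne_zero.mpr one_ne_zero, by rw [neg_one_smul, Set.mem_singleton_iff.mp h]⟩]
  exact (smul_monomial_sub_monomial_eq hc hpq hcf).imp (·.2) (·.2)

end

section
variable {k : Type*} [Field k] {r : ℕ} {A : Type*}

theorem mon_coe (d : Fin r →₀ ℕ) : mon k ⇑d = monomial d 1 := by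
  rw [mon, ← prod_X_pow_eq_monomial]
  exact (Finset.prod_subset (Finset.subset_univ _) fun i _ hi => by
    rw [Finsupp.notMem_support_iff.mp hi, pow_zero]).symm

def binomials (k : Type*) [Field k] (π : (Fin r → ℕ) → A) : Set (MvPolynomial (Fin r) k) :=
  {f | ∃ u v : Fin r → ℕ, π u = π v ∧ f = mon k u - mon k v}

variable {π : (Fin r → ℕ) → A} {p q : Fin r →₀ ℕ}

theorem mem_binomials_iff {f : MvPolynomial (Fin r) k} :
    f ∈ binomials k π ↔ ∃ d e : Fin r →₀ ℕ, π d = π e ∧ f = monomial d 1 - monomial e 1 := by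
  refine ⟨fun ⟨u, v, huv, hf⟩ => ?_,
    fun ⟨d, e, hde, hf⟩ => ⟨d, e, hde, by rw [mon_coe, mon_coe, hf]⟩⟩
  refine ⟨Finsupp.equivFunOnFinite.symm u, Finsupp.equivFunOnFinite.symm v, huv, ?_⟩
  rw [hf, ← mon_coe, ← mon_coe]
  rfl

theorem monomial_sub_monomial_mem_binomials {d e : Fin r →₀ ℕ} (h : π d = π e) :
    monomial d 1 - monomial e 1 ∈ binomials k π :=
  mem_binomials_iff.mpr ⟨d, e, h, rfl⟩

theorem exists_degree_of_mem_binomials {f : MvPolynomial (Fin r) k} (hf : f ∈ binomials k π) :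
    ∃ b, ∀ d ∈ f.support, π d = b := by
  obtain ⟨p, q, hpq, rfl⟩ := mem_binomials_iff.mp hf
  refine ⟨π p, fun d hd => ?_⟩
  obtain hd | hd := Finset.mem_union.mp (support_sub _ _ _ hd)
  · rw [Finset.mem_singleton.mp (support_monomial_subset hd)]
  · rw [Finset.mem_singleton.mp (support_monomial_subset hd), hpq]

theorem sum_coeff_eq_zero_of_mem_span_binomials {s : MvPolynomial (Fin r) k}
    (hs : s ∈ Ideal.span (binomials k π)) : ∑ d ∈ s.support, coeff d s = 0 := by
  have hle : Ideal.span (binomials k π) ≤ RingHom.ker (eval (1 : Fin r → k)) :=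
    Ideal.span_le.mpr fun f hf => by
      obtain ⟨p, q, -, rfl⟩ := mem_binomials_iff.mp hf
      simp [eval_monomial]
  simpa [eval_eq] using hle hs

theorem degree_eq_of_smul_mem_binomials {c : k} (hc : c ≠ 0) (hpq : p ≠ q)
    (h : c • (monomial p 1 - monomial q 1) ∈ binomials k π) : π p = π q := by
  obtain ⟨d, e, hde, h⟩ := mem_binomials_iff.mp h
  rcases smul_monomial_sub_monomial_eq hc hpq h with ⟨-, rfl, rfl⟩ | ⟨-, rfl, rfl⟩
  exacts [hde, hde.symm]

theorem IsBinomGenSet.isHomogGenSet [AddCancelCommMonoid A]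
    {IA : Ideal (MvPolynomial (Fin r) k)} {S : Set (MvPolynomial (Fin r) k)}
    (hS : IsBinomGenSet k π IA S) : IsHomogGenSet k π IA S :=
  ⟨fun f hf => exists_degree_of_mem_binomials (hS.1 f hf), hS.2⟩

theorem mem_span_diff_of_isHomogeneous (hpq : p ≠ q)
    (hfib : ∀ w : Fin r →₀ ℕ, π w = π p → w = p ∨ w = q) {s : MvPolynomial (Fin r) k}
    (hs : s ∈ Ideal.span (binomials k π)) (hhom : ∃ b, ∀ d ∈ s.support, π d = b)
    (hsf : ∀ c : k, c ≠ 0 → s ≠ c • (monomial p 1 - monomial q 1)) :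
    s ∈ Ideal.span
      (binomials k π \ {monomial p 1 - monomial q 1, -(monomial p 1 - monomial q 1)}) := by
  obtain ⟨b, hb⟩ := hhom
  have hsum := sum_coeff_eq_zero_of_mem_span_binomials hs
  refine mem_ideal_of_sum_coeff_eq_zero hsum fun d hd e he => Ideal.subset_span
    ⟨monomial_sub_monomial_mem_binomials ((hb d hd).trans (hb e he).symm), fun hde => ?_⟩
  -- then `p` is `d` or `e`, so `s` has degree `π p` and is supported on the fiber `{p, q}`
  have hbp : π p = b := by
    rcases monomial_sub_monomial_mem_pair_neg hpq hde with ⟨rfl, -⟩ | ⟨-, rfl⟩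
    exacts [hb _ hd, hb _ he]
  have hs_eq := eq_coeff_smul_of_support_subset hpq
    (fun x hx => hfib x ((hb x hx).trans hbp.symm)) hsum
  refine hsf _ (fun h0 => ?_) hs_eq
  rw [h0, zero_smul] at hs_eq
  simp [hs_eq] at hd

end

theorem Ideal.span_diff_pair_neg_eq_span {R : Type*} [CommRing R] {T : Set R} {x : R}
    (hx : x ∈ Ideal.span (T \ {x, -x})) : Ideal.span (T \ {x, -x}) = Ideal.span T := by
  refine le_antisymm (Ideal.span_mono Set.sdiff_subset) (Ideal.span_le.mpr fun y hy => ?_)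
  by_cases hyx : y ∈ ({x, -x} : Set R)
  · rcases hyx with rfl | rfl
    exacts [hx, neg_mem hx]
  · exact Ideal.subset_span ⟨hy, hyx⟩

section
variable {k : Type*} [Field k] {r : ℕ} {A : Type*} [AddCancelCommMonoid A]
  {π : (Fin r → ℕ) → A} {p q : Fin r →₀ ℕ}

theorem IsIndispBinomial.notMem_span_diff {f : MvPolynomial (Fin r) k}
    (hf : IsIndispBinomial k π (Ideal.span (binomials k π)) f) :
    f ∉ Ideal.span (binomials k π \ {f, -f}) := fun hmem => by
  have hM : IsBinomGenSet k π (Ideal.span (binomials k π)) (binomials k π \ {f, -f}) :=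
    ⟨fun g hg => hg.1, Ideal.span_diff_pair_neg_eq_span hmem⟩
  rcases hf.2.2 _ hM with h | h
  exacts [h.2 (Or.inl rfl), h.2 (Or.inr rfl)]

theorem IsIndispBinomial.eq_or_eq_of_degree_eq (hpq : p ≠ q)
    (hf : IsIndispBinomial k π (Ideal.span (binomials k π)) (monomial p 1 - monomial q 1))
    {w : Fin r →₀ ℕ} (hw : π w = π p) : w = p ∨ w = q := by
  set f : MvPolynomial (Fin r) k := monomial p 1 - monomial q 1
  have hdeg : π p = π q := by
    obtain ⟨u, v, -, huv, h⟩ := hf.1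
    exact degree_eq_of_smul_mem_binomials (one_ne_zero : (1 : k) ≠ 0) hpq
      (by rw [one_smul]; exact ⟨u, v, huv, h⟩)
  by_contra! hne
  have hpw : monomial p 1 - monomial w 1 ∈ binomials k π \ {f, -f} := by
    refine ⟨monomial_sub_monomial_mem_binomials hw.symm, fun h => ?_⟩
    rcases monomial_sub_monomial_mem_pair_neg hpq h with ⟨-, h⟩ | ⟨h, -⟩
    exacts [hne.2 h, hpq h]
  have hwq : monomial w 1 - monomial q 1 ∈ binomials k π \ {f, -f} := by
    refine ⟨monomial_sub_monomial_mem_binomials (hw.trans hdeg), fun h => ?_⟩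
    rcases monomial_sub_monomial_mem_pair_neg hpq h with ⟨h, -⟩ | ⟨-, h⟩
    exacts [hne.1 h, hpq h.symm]
  have hsum := add_mem (Ideal.subset_span hpw) (Ideal.subset_span hwq)
  rw [sub_add_sub_cancel] at hsum
  exact hf.notMem_span_diff hsum

theorem IsIndispBinomial.exists_smul_mem (hpq : p ≠ q)
    (hf : IsIndispBinomial k π (Ideal.span (binomials k π)) (monomial p 1 - monomial q 1))
    {S : Set (MvPolynomial (Fin r) k)} (hS : IsHomogGenSet k π (Ideal.span (binomials k π)) S) :
    ∃ c : k, c ≠ 0 ∧ c • (monomial p 1 - monomial q 1) ∈ S := by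
  by_contra! hcon
  refine hf.notMem_span_diff (le_of_eq_of_le hS.2.symm ?_ hf.2.1)
  exact Ideal.span_le.mpr fun s hs => mem_span_diff_of_isHomogeneous hpq
    (fun _ => hf.eq_or_eq_of_degree_eq hpq) (hS.2 ▸ Ideal.subset_span hs) (hS.1 s hs)
    fun c hc h => hcon c hc (h ▸ hs)

theorem isIndispBinomial_of_forall_smul_mem (hpq : p ≠ q)
    (h : ∀ S, IsHomogGenSet k π (Ideal.span (binomials k π)) S →
      ∃ c : k, c ≠ 0 ∧ c • (monomial p 1 - monomial q 1) ∈ S) :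
    IsIndispBinomial k π (Ideal.span (binomials k π)) (monomial p 1 - monomial q 1) := by
  obtain ⟨c, hc, hcB⟩ := h _ ⟨fun f hf => exists_degree_of_mem_binomials hf, rfl⟩
  have hdeg := degree_eq_of_smul_mem_binomials hc hpq hcB
  refine ⟨⟨p, q, DFunLike.coe_injective.ne hpq, hdeg, by rw [mon_coe, mon_coe]⟩,
    Ideal.subset_span (monomial_sub_monomial_mem_binomials hdeg), fun S hS => ?_⟩
  obtain ⟨c, hc, hcS⟩ := h S hS.isHomogGenSet
  obtain ⟨d, e, -, hde⟩ := mem_binomials_iff.mp (hS.1 _ hcS)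
  rcases smul_monomial_sub_monomial_eq hc hpq hde with ⟨rfl, -⟩ | ⟨rfl, -⟩
  · exact Or.inl (by simpa using hcS)
  · exact Or.inr (by simpa using hcS)

end

theorem statement_2_general {k : Type*} [Field k] {r : ℕ}
    {A : Type*} [AddCancelCommMonoid A]
    (π : (Fin r → ℕ) → A)
    (IA : Ideal (MvPolynomial (Fin r) k))
    (hIA : IA = Ideal.span {f | ∃ u v : Fin r → ℕ, π u = π v ∧ f = mon k u - mon k v})
    (u v : Fin r → ℕ) (huv : u ≠ v) :
    IsIndispBinomial k π IA (mon k u - mon k v) ↔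
      ∀ S, IsHomogGenSet k π IA S → ∃ c : k, c ≠ 0 ∧ c • (mon k u - mon k v) ∈ S := by
  obtain ⟨p, rfl⟩ : ∃ p : Fin r →₀ ℕ, ⇑p = u := ⟨Finsupp.equivFunOnFinite.symm u, rfl⟩
  obtain ⟨q, rfl⟩ : ∃ q : Fin r →₀ ℕ, ⇑q = v := ⟨Finsupp.equivFunOnFinite.symm v, rfl⟩
  have hpq : p ≠ q := fun h => huv (congrArg _ h)
  subst hIA
  rw [mon_coe, mon_coe]
  exact ⟨fun hf _ hS => hf.exists_smul_mem hpq hS, isIndispBinomial_of_forall_smul_mem hpq⟩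

/-- A binomial `X^u − X^v ∈ I_A` with `u ≠ v` is indispensable if and only if every
`A`-homogeneous generating set of `I_A` contains a nonzero scalar multiple of it. -/
theorem statement_2 {k : Type*} [Field k] {r : ℕ} (hr : 1 ≤ r)
    {A : Type*} [AddCancelCommMonoid A]
    (hred : ∀ x y : A, x + y = 0 → x = 0 ∧ y = 0)
    (a : Fin r → A) (ha : ∀ i, a i ≠ 0)
    (π : (Fin r → ℕ) → A) (hπ : ∀ u, π u = ∑ i, u i • a i)
    (hgen : ∀ x : A, ∃ u, π u = x)
    (hfib : ∀ x : A, {u : Fin r → ℕ | π u = x}.Finite)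
    (IA : Ideal (MvPolynomial (Fin r) k))
    (hIA : IA = Ideal.span {f | ∃ u v : Fin r → ℕ, π u = π v ∧ f = mon k u - mon k v})
    (u v : Fin r → ℕ) (huv : u ≠ v)
    (hmem : mon k u - mon k v ∈ IA) :
    IsIndispBinomial k π IA (mon k u - mon k v) ↔
      ∀ S, IsHomogGenSet k π IA S → ∃ c : k, c ≠ 0 ∧ c • (mon k u - mon k v) ∈ S :=
  statement_2_general π IA hIA u v huv
end

section
/- Let a ∈ A and let u, v ∈ π^{-1}(a) with v ≠ u. If min(u,v) is a maximal element, with respect to the componentwise partial order on ℕ^r (i.e. with respect to divisibility of the corresponding monomials gcd(X^u, X^w)), of the set { min(u,w) : w ∈ π^{-1}(a), w ≠ u }, then the monomial X^{u − min(u,v)} is an indispensable monomial of I_A. -/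
open MvPolynomial

/-! With `m = u ⊓ v`, the binomial `X^(u - m) - X^(v - m)` lies in `I_A`. Since a binomial
generating set spans `I_A` inside the monomial ideal of its own monomials, some nontrivial
generator `X^p - X^q` has `X^p ∣ X^(u - m)`; maximality of `m` then forces `p = u - m`. -/

section Monomials

variable {k : Type*} [Field k] {r : ℕ}

lemma mon_eq_monomial (u : Fin r → ℕ) :
    mon k u = monomial (Finsupp.equivFunOnFinite.symm u) 1 := by
  rw [monomial_eq, Finsupp.prod_fintype _ _ (fun _ => pow_zero _), C_1, one_mul, mon,
    Finsupp.coe_equivFunOnFinite_symm]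

lemma exists_le_of_mem_span_image_mon {E : Set (Fin r → ℕ)} {g : MvPolynomial (Fin r) k}
    (hg : g ∈ Ideal.span (mon k '' E)) {x : Fin r → ℕ}
    (hx : coeff (Finsupp.equivFunOnFinite.symm x) g ≠ 0) : ∃ e ∈ E, e ≤ x := by
  have hE : mon k '' E =
      (fun s => monomial s (1 : k)) '' (Finsupp.equivFunOnFinite.symm '' E) := by
    rw [Set.image_image]
    exact Set.image_congr fun e _ => mon_eq_monomial e
  rw [hE, mem_ideal_span_monomial_image] at hg
  obtain ⟨_, ⟨e, he, rfl⟩, hle⟩ := hg _ (mem_support_iff.mpr hx)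
  exact ⟨e, he, by simpa only [← Finsupp.coe_le_coe, Finsupp.coe_equivFunOnFinite_symm] using hle⟩

lemma coeff_mon_sub_mon_ne_zero {x y : Fin r → ℕ} (hxy : x ≠ y) :
    coeff (Finsupp.equivFunOnFinite.symm x) (mon k x - mon k y) ≠ 0 := by
  simp [mon_eq_monomial, coeff_monomial, Finsupp.equivFunOnFinite.symm.injective.ne hxy.symm]

lemma exists_binomial_le_of_mem_span {A : Type*} {π : (Fin r → ℕ) → A}
    {S : Set (MvPolynomial (Fin r) k)} (hS : ∀ f ∈ S, ∃ p q, π p = π q ∧ f = mon k p - mon k q)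
    {x y : Fin r → ℕ} (hxy : x ≠ y) (h : mon k x - mon k y ∈ Ideal.span S) :
    ∃ f ∈ S, ∃ p q, π p = π q ∧ p ≠ q ∧ p ≤ x ∧
      (f = mon k p - mon k q ∨ f = mon k q - mon k p) := by
  set E : Set (Fin r → ℕ) := {p | ∃ f ∈ S, ∃ q, π p = π q ∧ p ≠ q ∧
    (f = mon k p - mon k q ∨ f = mon k q - mon k p)}
  have hSE : S ⊆ Ideal.span (mon k '' E) := by
    intro f hf
    obtain ⟨p, q, hpq, rfl⟩ := hS f hf
    rcases eq_or_ne p q with rfl | hne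
    · simp
    · exact sub_mem (Ideal.subset_span ⟨p, ⟨_, hf, q, hpq, hne, .inl rfl⟩, rfl⟩)
        (Ideal.subset_span ⟨q, ⟨_, hf, p, hpq.symm, hne.symm, .inr rfl⟩, rfl⟩)
  obtain ⟨p, ⟨f, hf, q, hpq, hne, hfpq⟩, hle⟩ :=
    exists_le_of_mem_span_image_mon (Ideal.span_le.mpr hSE h) (coeff_mon_sub_mon_ne_zero hxy)
  exact ⟨f, hf, p, q, hpq, hne, hle, hfpq⟩

end Monomials

section Fibers

variable {ι A : Type*} [AddCancelCommMonoid A] {π : (ι → ℕ) → A}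

lemma map_tsub_inf_eq (hπ : ∀ x y, π (x + y) = π x + π y) {u v : ι → ℕ} (h : π u = π v) :
    π (u - u ⊓ v) = π (v - u ⊓ v) := by
  refine add_right_cancel (b := π (u ⊓ v)) ?_
  rw [← hπ, ← hπ, tsub_add_cancel_of_le inf_le_left, tsub_add_cancel_of_le inf_le_right, h]

lemma tsub_inf_ne_tsub_inf {u v : ι → ℕ} (huv : u ≠ v) : u - u ⊓ v ≠ v - u ⊓ v := fun h =>
  huv (by simpa only [tsub_add_cancel_of_le, inf_le_left, inf_le_right] using congr($h + u ⊓ v))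

/-- Otherwise `w = (u - u ⊓ v - p) + q + u ⊓ v` is a point `≠ u` of the fiber of `u` with
`u ⊓ w` strictly above `u ⊓ v`. -/
lemma eq_tsub_inf_of_le (hπ : ∀ x y, π (x + y) = π x + π y) {u v : ι → ℕ}
    (hmax : ∀ w, π w = π u → w ≠ u → u ⊓ v ≤ u ⊓ w → u ⊓ v = u ⊓ w)
    {p q : ι → ℕ} (hpq : π p = π q) (hne : p ≠ q) (hp : p ≤ u - u ⊓ v) : p = u - u ⊓ v := by
  set w := (u - u ⊓ v - p) + q + u ⊓ v
  have hw : π w = π u := by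
    rw [hπ, hπ, ← hpq, ← hπ, tsub_add_cancel_of_le hp, ← hπ,
      tsub_add_cancel_of_le inf_le_left]
  have hwu : w ≠ u := fun h => hne <| funext fun i => by
    have := congr_fun h i
    have := hp i
    simp only [w, Pi.add_apply, Pi.sub_apply, Pi.inf_apply] at *
    omega
  have hle : u ⊓ v ≤ u ⊓ w := fun i => by
    simp only [w, Pi.add_apply, Pi.inf_apply]
    omega
  have heq := hmax w hw hwu hle
  funext i
  have := congr_fun heq i
  have := hp i
  simp only [w, Pi.add_apply, Pi.sub_apply, Pi.inf_apply] at *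
  omega

end Fibers

theorem statement_7_general {k : Type*} [Field k] {r : ℕ}
    {A : Type*} [AddCancelCommMonoid A]
    (a : Fin r → A)
    (π : (Fin r → ℕ) → A) (hπ : ∀ u, π u = ∑ i, u i • a i)
    (IA : Ideal (MvPolynomial (Fin r) k))
    (hIA : IA = Ideal.span {f | ∃ u v : Fin r → ℕ, π u = π v ∧ f = mon k u - mon k v})
    (b : A) (u v : Fin r → ℕ) (hu : π u = b) (hv : π v = b) (hvu : v ≠ u)
    (hmax : ∀ w : Fin r → ℕ, π w = b → w ≠ u →
      (∀ i, min (u i) (v i) ≤ min (u i) (w i)) →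
      ∀ i, min (u i) (v i) = min (u i) (w i)) :
    IsIndispMonomial k π IA (fun i => u i - min (u i) (v i)) := by
  intro S hS
  have hadd : ∀ x y, π (x + y) = π x + π y := fun x y => by
    simp only [hπ, Pi.add_apply, add_smul, Finset.sum_add_distrib]
  have hmem : mon k (u - u ⊓ v) - mon k (v - u ⊓ v) ∈ Ideal.span S := by
    rw [hS.2, hIA]
    exact Ideal.subset_span ⟨_, _, map_tsub_inf_eq hadd (hu.trans hv.symm), rfl⟩
  obtain ⟨f, hfS, p, q, hpq, hpq_ne, hp, hf⟩ :=
    exists_binomial_le_of_mem_span hS.1 (tsub_inf_ne_tsub_inf hvu.symm) hmem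
  obtain rfl : p = u - u ⊓ v :=
    eq_tsub_inf_of_le hadd (fun w hw hwu hle => funext (hmax w (hw.trans hu) hwu hle))
      hpq hpq_ne hp
  exact ⟨f, hfS, q, hf⟩

/-- If `u, v ∈ π⁻¹(b)` with `v ≠ u` and `min(u,v)` is a maximal element (for the
componentwise order) of `{min(u,w) : w ∈ π⁻¹(b), w ≠ u}`, then `X^{u − min(u,v)}`
is an indispensable monomial of `I_A`. -/
theorem statement_7 {k : Type*} [Field k] {r : ℕ} (hr : 1 ≤ r)
    {A : Type*} [AddCancelCommMonoid A]
    (hred : ∀ x y : A, x + y = 0 → x = 0 ∧ y = 0)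
    (a : Fin r → A) (ha : ∀ i, a i ≠ 0)
    (π : (Fin r → ℕ) → A) (hπ : ∀ u, π u = ∑ i, u i • a i)
    (hgen : ∀ x : A, ∃ u, π u = x)
    (hfib : ∀ x : A, {u : Fin r → ℕ | π u = x}.Finite)
    (IA : Ideal (MvPolynomial (Fin r) k))
    (hIA : IA = Ideal.span {f | ∃ u v : Fin r → ℕ, π u = π v ∧ f = mon k u - mon k v})
    (b : A) (u v : Fin r → ℕ) (hu : π u = b) (hv : π v = b) (hvu : v ≠ u)
    (hmax : ∀ w : Fin r → ℕ, π w = b → w ≠ u →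
      (∀ i, min (u i) (v i) ≤ min (u i) (w i)) →
      ∀ i, min (u i) (v i) = min (u i) (w i)) :
    IsIndispMonomial k π IA (fun i => u i - min (u i) (v i)) :=
  statement_7_general a π hπ IA hIA b u v hu hv hvu hmax
end

section
/- The toric ideal I_A of the binary marginal independence model equals the ideal of k[X_1, …, X_16] generated by the four binomials X_1·X_11 − X_3·X_9, X_2·X_12 − X_4·X_10, X_5·X_15 − X_7·X_13 and X_6·X_16 − X_8·X_14. -/
/-!
The variables split into the four blocks `{r, r + 2, r + 8, r + 10}`, `r ∈ {0, 1, 4, 5}`, and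
the model matrix is the direct sum of four copies of the matrix of the 2 × 2 independence
model, whose toric ideal is generated by the single minor `xw - yz`. Concretely: if two
monomials have the same image under `piModel`, then on each block they are 2 × 2 tables with
the same margins, so their difference is divisible by that block's minor; multiplying the four
blocks together shows that the whole binomial lies in the ideal of the four minors.
-/

open MvPolynomial

/-- The additive map `ℕ¹⁶ → ℕ⁸ × ℕ⁸` given by the matrix of the binary marginal
independence model: the `j`-th standard basis vector (0-indexed) is sent to
`(f_{j % 8}, g_{2⌊j/4⌋ + j % 2})` (0-indexed standard basis vectors). -/
def piModel (u : Fin 16 → ℕ) : (Fin 8 → ℕ) × (Fin 8 → ℕ) :=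
  (fun s => ∑ j : Fin 16, if (s : ℕ) = (j : ℕ) % 8 then u j else 0,
   fun s => ∑ j : Fin 16, if (s : ℕ) = 2 * ((j : ℕ) / 4) + (j : ℕ) % 2 then u j else 0)

theorem mul_sub_mul_dvd_of_margins_eq {R : Type*} [CommRing R] (x y z w : R)
    {a b c d a' b' c' d' : ℕ} (hrow₁ : a + b = a' + b') (hcol₁ : a + c = a' + c')
    (hrow₂ : c + d = c' + d') :
    x * w - y * z ∣ x ^ a * y ^ b * z ^ c * w ^ d - x ^ a' * y ^ b' * z ^ c' * w ^ d' := by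
  wlog h : a' ≤ a generalizing a b c d a' b' c' d'
  · simpa only [neg_sub] using (this hrow₁.symm hcol₁.symm hrow₂.symm (by omega)).neg_right
  obtain ⟨n, rfl⟩ := Nat.exists_eq_add_of_le h
  obtain rfl : b' = b + n := by omega
  obtain rfl : c' = c + n := by omega
  obtain rfl : d = d' + n := by omega
  have hfactor : x ^ (a' + n) * y ^ b * z ^ c * w ^ (d' + n)
      - x ^ a' * y ^ (b + n) * z ^ (c + n) * w ^ d'
      = x ^ a' * y ^ b * z ^ c * w ^ d' * ((x * w) ^ n - (y * z) ^ n) := by ring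
  rw [hfactor]
  exact dvd_mul_of_dvd_right (sub_dvd_pow_sub_pow _ _ n) _

theorem Ideal.prod_sub_prod_mem {R ι : Type*} [CommRing R] {I : Ideal R} {s : Finset ι}
    {f g : ι → R} (h : ∀ i ∈ s, f i - g i ∈ I) :
    ∏ i ∈ s, f i - ∏ i ∈ s, g i ∈ I := by
  rw [← Ideal.Quotient.eq, map_prod, map_prod]
  exact Finset.prod_congr rfl fun i hi => Ideal.Quotient.eq.mpr (h i hi)

theorem prod_fin_sixteen_eq_prod_blocks {M : Type*} [CommMonoid M] (f : Fin 16 → M) :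
    ∏ i, f i =
      ∏ r ∈ ({0, 1, 4, 5} : Finset (Fin 16)), f r * f (r + 2) * f (r + 8) * f (r + 10) := by
  rw [Fin.prod_univ_def,
    show List.finRange 16 = [0, 1, 2, 3, 4, 5, 6, 7, 8, 9, 10, 11, 12, 13, 14, 15] by decide]
  simp [Finset.prod_insert, mul_assoc, mul_left_comm]

theorem margins_eq_of_piModel_eq {u v : Fin 16 → ℕ} (h : piModel u = piModel v)
    {r : Fin 16} (hr : r ∈ ({0, 1, 4, 5} : Finset (Fin 16))) :
    u r + u (r + 2) = v r + v (r + 2) ∧ u r + u (r + 8) = v r + v (r + 8) ∧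
      u (r + 8) + u (r + 10) = v (r + 8) + v (r + 10) := by
  simp only [piModel, Prod.ext_iff, funext_iff, Fin.forall_fin_succ, Fin.sum_univ_succ] at h
  simp at h
  simp only [Finset.mem_insert, Finset.mem_singleton] at hr
  rcases hr with rfl | rfl | rfl | rfl <;> simp only [Fin.reduceAdd] <;> omega

theorem prod_X_pow_single_add_single {σ R : Type*} [Fintype σ] [DecidableEq σ]
    [CommSemiring R] (a b : σ) :
    ∏ i, (X i : MvPolynomial σ R) ^ (Pi.single a 1 + Pi.single b 1 : σ → ℕ) i =
      X a * X b := by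
  simp only [Pi.add_apply, pow_add, Finset.prod_mul_distrib]
  simp [Pi.single_apply, pow_ite]

theorem X_mul_X_sub_X_mul_X_eq_binomial {k : Type*} [CommRing k] {a b c d : Fin 16}
    (h : piModel (Pi.single a 1 + Pi.single b 1) = piModel (Pi.single c 1 + Pi.single d 1)) :
    ∃ u v : Fin 16 → ℕ, piModel u = piModel v ∧
      (X a * X b - X c * X d : MvPolynomial (Fin 16) k) = (∏ i, X i ^ u i) - ∏ i, X i ^ v i :=
  ⟨_, _, h, by rw [prod_X_pow_single_add_single, prod_X_pow_single_add_single]⟩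

/-- The toric ideal of the binary marginal independence model equals the ideal
generated by the four binomials `X₁X₁₁ − X₃X₉`, `X₂X₁₂ − X₄X₁₀`, `X₅X₁₅ − X₇X₁₃`
and `X₆X₁₆ − X₈X₁₄` (variables written here with 0-based indices). -/
theorem statement_9 {k : Type*} [Field k]
    (IA : Ideal (MvPolynomial (Fin 16) k))
    (hIA : IA = Ideal.span {f | ∃ u v : Fin 16 → ℕ, piModel u = piModel v ∧
      f = (∏ i, X i ^ u i) - ∏ i, X i ^ v i}) :
    IA = Ideal.span {X 0 * X 10 - X 2 * X 8, X 1 * X 11 - X 3 * X 9,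
      X 4 * X 14 - X 6 * X 12, X 5 * X 15 - X 7 * X 13} := by
  subst hIA
  apply le_antisymm
  · rw [Ideal.span_le]
    rintro _ ⟨u, v, huv, rfl⟩
    rw [prod_fin_sixteen_eq_prod_blocks, prod_fin_sixteen_eq_prod_blocks]
    refine Ideal.prod_sub_prod_mem fun r hr => ?_
    obtain ⟨hrow₁, hcol₁, hrow₂⟩ := margins_eq_of_piModel_eq huv hr
    refine Ideal.mem_of_dvd _ (mul_sub_mul_dvd_of_margins_eq _ _ _ _ hrow₁ hcol₁ hrow₂) ?_
    simp only [Finset.mem_insert, Finset.mem_singleton] at hr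
    rcases hr with rfl | rfl | rfl | rfl <;> exact Ideal.subset_span (by simp)
  · simp only [Ideal.span_le, Set.insert_subset_iff, Set.singleton_subset_iff]
    refine ⟨?_, ?_, ?_, ?_⟩ <;>
      exact Ideal.subset_span (X_mul_X_sub_X_mul_X_eq_binomial (by decide))
end
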